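/- Let A be a Hermitian 3×3 complex matrix, let Θ = Θ(0,0,A,0) (the 6×6 block matrix with A in the upper-right 3×3 block and zeros elsewhere), let X, Y be Hermitian 3×3 complex matrices, and let p, q ∈ ℝ. Then the symplectic action of Θ on P(X,Y,p,q) gives Θ·P(X,Y,p,q) = P(qA, 2·A*X, tr(A∘Y), 0). (Action of a null translation of the first kind.) -/

import Mathlib

open Matrix BigOperators

/-- 3×3 complex matrices. -/
abbrev Mat3 := Matrix (Fin 3) (Fin 3) ℂ

/-- Sign of an integer, valued in ℤ. -/
def sgnZ (n : ℤ) : ℤ := if 0 < n then 1 else if n < 0 then -1 else 0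

/-- The Levi-Civita symbol on `Fin 3`. -/
def eps (a b c : Fin 3) : ℤ :=
  sgnZ ((b : ℤ) - (a : ℤ)) * sgnZ ((c : ℤ) - (a : ℤ)) * sgnZ ((c : ℤ) - (b : ℤ))

/-- The cubie of a 3×3 matrix: (*X)_{abc} = X_a^m ε_{mbc}. -/
noncomputable def cubie (X : Mat3) (a b c : Fin 3) : ℂ :=
  ∑ m, X a m * ((eps m b c : ℤ) : ℂ)

/-- The Jordan product X∘Y = (XY+YX)/2. -/
noncomputable def jord (X Y : Mat3) : Mat3 := (1/2 : ℂ) • (X * Y + Y * X)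

/-- The Freudenthal product. -/
noncomputable def freud (X Y : Mat3) : Mat3 :=
  jord X Y - (1/2 : ℂ) • (X.trace • Y + Y.trace • X)
    + (1/2 : ℂ) • (X.trace * Y.trace - (jord X Y).trace) • (1 : Mat3)

/-- Reduce an index in {1,...,6} to an index in {1,2,3}: for a "large" index
(value ≥ 4, i.e. `Fin 6` value ≥ 3) this is a−3; "small" indices are unchanged. -/
def lo (a : Fin 6) : Fin 3 := ⟨a.val % 3, Nat.mod_lt _ (by norm_num)⟩

/-- The totally antisymmetric rank-3 tensor P(X,Y,p,q) on indices in {1,...,6}: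
its 000 cubie is p·ε, its 100 cubie is *Y, its 011 cubie is *X, its 111 cubie
is q·ε, and all other components are determined by total antisymmetry
(using that (*X)_{abc} is antisymmetric in its last two indices). -/
noncomputable def PT (X Y : Mat3) (p q : ℂ) : Fin 6 → Fin 6 → Fin 6 → ℂ := fun a b c =>
  if a.val < 3 then
    if b.val < 3 then
      if c.val < 3 then p * ((eps (lo a) (lo b) (lo c) : ℤ) : ℂ)  -- (s,s,s)
      else cubie Y (lo c) (lo a) (lo b)                            -- (s,s,l) = +P_{cab}
    else
      if c.val < 3 then -(cubie Y (lo b) (lo a) (lo c))            -- (s,l,s) = −P_{bac}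
      else cubie X (lo a) (lo b) (lo c)                            -- (s,l,l)
  else
    if b.val < 3 then
      if c.val < 3 then cubie Y (lo a) (lo b) (lo c)               -- (l,s,s)
      else -(cubie X (lo b) (lo a) (lo c))                         -- (l,s,l) = −P_{bac}
    else
      if c.val < 3 then cubie X (lo c) (lo a) (lo b)               -- (l,l,s) = +P_{cab}
      else q * ((eps (lo a) (lo b) (lo c) : ℤ) : ℂ)                -- (l,l,l)

/-- The action of a 6×6 matrix Θ on a rank-3 tensor:
(Θ·P)_{abc} = Θ_a^m P_{mbc} + Θ_b^m P_{amc} + Θ_c^m P_{abm}. -/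
noncomputable def act (Θ : Matrix (Fin 6) (Fin 6) ℂ) (P : Fin 6 → Fin 6 → Fin 6 → ℂ) :
    Fin 6 → Fin 6 → Fin 6 → ℂ := fun a b c =>
  (∑ m, Θ a m * P m b c) + (∑ m, Θ b m * P a m c) + (∑ m, Θ c m * P a b m)

/-- The 6×6 block matrix Θ(φ,ρ,A,B) = [[φ − (ρ/3)I, A],[B, −φ† + (ρ/3)I]]. -/
noncomputable def ThetaM (φ : Mat3) (ρ : ℝ) (A B : Mat3) : Matrix (Fin 6) (Fin 6) ℂ :=
  Matrix.reindex finSumFinEquiv finSumFinEquiv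
    (Matrix.fromBlocks (φ - ((ρ : ℂ)/3) • 1) A B (-φᴴ + ((ρ : ℂ)/3) • 1))

/-!
The matrix `Θ(0,0,A,0)` only maps the large indices `4,5,6` to the small ones `1,2,3`, so each
component of `Θ·P` with `k` large indices is a contraction of `A` with the block of `P` having
`k + 1` large indices. The block `q ε` gives `q (*A)`; the block `*X` gives `*(2 A*X)` by the
`ε`-expansion of the Freudenthal product; the block `*Y` gives `tr(AY) ε`, because for every
3×3 matrix `M` one has `M_a^n ε_{nbc} + M_b^n ε_{anc} + M_c^n ε_{abn} = tr M · ε_{abc}`.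
-/

lemma eps_swap_left (a b c : Fin 3) : eps a b c = -eps b a c := by
  revert a b c; decide

lemma eps_cycle (a b c : Fin 3) : eps a b c = eps b c a := by
  revert a b c; decide

lemma lo_castAdd (i : Fin 3) : lo (Fin.castAdd 3 i) = i := by
  ext; simp [lo, Nat.mod_eq_of_lt i.isLt]

lemma lo_natAdd (i : Fin 3) : lo (Fin.natAdd 3 i) = i := by
  ext; simp [lo, Nat.mod_eq_of_lt i.isLt]

section Cubie

variable (X : Mat3) (a b c : Fin 3)

lemma cubie_swap : cubie X a b c = -cubie X a c b := by
  simp only [cubie, ← Finset.sum_neg_distrib, ← mul_neg]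
  refine Finset.sum_congr rfl fun m _ => ?_
  rw [eps_cycle, eps_swap_left, ← eps_cycle]
  push_cast; ring

lemma sum_mul_mul_eps (s : ℂ) : ∑ j, X a j * (s * eps j b c) = cubie (s • X) a b c := by
  simp only [cubie, Matrix.smul_apply, smul_eq_mul]
  exact Finset.sum_congr rfl fun j _ => by ring

lemma sum_mul_cubie (M : Mat3) : ∑ j, M a j * cubie X j b c = cubie (M * X) a b c := by
  simp only [cubie, mul_apply, Finset.mul_sum, Finset.sum_mul, mul_assoc]
  exact Finset.sum_comm

lemma cubie_sub_cubie_add_cubie :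
    cubie X a b c - cubie X b a c + cubie X c a b = X.trace * eps a b c := by
  fin_cases a <;> fin_cases b <;> fin_cases c <;>
    simp [cubie, eps, sgnZ, Fin.sum_univ_three, Matrix.trace] <;> ring

end Cubie

lemma trace_jord (A Y : Mat3) : (jord A Y).trace = (A * Y).trace := by
  rw [jord, trace_smul, trace_add, trace_mul_comm Y A, smul_eq_mul]; ring

lemma cubie_two_smul_freud (A X : Mat3) (a b c : Fin 3) :
    cubie ((2 : ℂ) • freud A X) c a b
      = ∑ m, A b m * cubie X a m c - ∑ m, A a m * cubie X b m c := by
  simp only [cubie, freud, jord, Fin.sum_univ_three, Matrix.add_apply, Matrix.smul_apply,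
    Matrix.sub_apply, Matrix.mul_apply, Matrix.one_apply, Matrix.trace, Matrix.diag, smul_eq_mul]
  fin_cases a <;> fin_cases b <;> fin_cases c <;>
    simp [eps, sgnZ] <;> ring

section ThetaM

variable (φ : Mat3) (ρ : ℝ) (A B : Mat3) (i j : Fin 3)

lemma ThetaM_castAdd_castAdd :
    ThetaM φ ρ A B (Fin.castAdd 3 i) (Fin.castAdd 3 j) = (φ - ((ρ : ℂ) / 3) • 1) i j := by
  rw [ThetaM, reindex_apply, submatrix_apply, finSumFinEquiv_symm_apply_castAdd,
    finSumFinEquiv_symm_apply_castAdd, fromBlocks_apply₁₁]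

lemma ThetaM_castAdd_natAdd : ThetaM φ ρ A B (Fin.castAdd 3 i) (Fin.natAdd 3 j) = A i j := by
  rw [ThetaM, reindex_apply, submatrix_apply, finSumFinEquiv_symm_apply_castAdd,
    finSumFinEquiv_symm_apply_natAdd, fromBlocks_apply₁₂]

lemma ThetaM_natAdd_castAdd : ThetaM φ ρ A B (Fin.natAdd 3 i) (Fin.castAdd 3 j) = B i j := by
  rw [ThetaM, reindex_apply, submatrix_apply, finSumFinEquiv_symm_apply_natAdd,
    finSumFinEquiv_symm_apply_castAdd, fromBlocks_apply₂₁]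

lemma ThetaM_natAdd_natAdd :
    ThetaM φ ρ A B (Fin.natAdd 3 i) (Fin.natAdd 3 j) = (-φᴴ + ((ρ : ℂ) / 3) • 1) i j := by
  rw [ThetaM, reindex_apply, submatrix_apply, finSumFinEquiv_symm_apply_natAdd,
    finSumFinEquiv_symm_apply_natAdd, fromBlocks_apply₂₂]

variable (f : Fin 6 → ℂ)

lemma sum_ThetaM_nullTranslation_castAdd_mul :
    ∑ m, ThetaM 0 0 A 0 (Fin.castAdd 3 i) m * f m = ∑ j, A i j * f (Fin.natAdd 3 j) := by
  rw [Fin.sum_univ_add (a := 3) (b := 3)]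
  simp [ThetaM_castAdd_castAdd, ThetaM_castAdd_natAdd, -Fin.natAdd_eq_addNat]

lemma sum_ThetaM_nullTranslation_natAdd_mul :
    ∑ m, ThetaM 0 0 A 0 (Fin.natAdd 3 i) m * f m = 0 := by
  rw [Fin.sum_univ_add (a := 3) (b := 3)]
  simp [ThetaM_natAdd_castAdd, ThetaM_natAdd_natAdd, -Fin.natAdd_eq_addNat]

end ThetaM

theorem stmt5_general (A : Mat3) (X Y : Mat3)
    (p q : ℝ) :
    act (ThetaM 0 0 A 0) (PT X Y (p : ℂ) (q : ℂ))
      = PT ((q : ℂ) • A) ((2 : ℂ) • freud A X) ((jord A Y).trace) 0 := by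
  funext a b c
  refine Fin.addCases (m := 3) (n := 3) (fun a => ?_) (fun a => ?_) a <;>
  refine Fin.addCases (m := 3) (n := 3) (fun b => ?_) (fun b => ?_) b <;>
  refine Fin.addCases (m := 3) (n := 3) (fun c => ?_) (fun c => ?_) c <;>
  simp only [act, sum_ThetaM_nullTranslation_castAdd_mul, sum_ThetaM_nullTranslation_natAdd_mul,
    PT, lo_castAdd, lo_natAdd, Fin.val_castAdd, Fin.val_natAdd, Fin.is_lt, if_true,
    add_lt_iff_neg_left, not_lt_zero, if_false, add_zero, zero_add, mul_neg, Finset.sum_neg_distrib]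
  -- the goals are the blocks sss, ssl, sls, sll, lss, lsl, lls, lll (s small index, l large)
  · rw [trace_jord, ← cubie_sub_cubie_add_cubie]
    simp only [sum_mul_cubie]; ring
  · linear_combination (cubie_two_smul_freud A X a b c).symm
  · rw [cubie_two_smul_freud]
    simp only [cubie_swap X a b, mul_neg, Finset.sum_neg_distrib]; ring
  · exact sum_mul_mul_eps A a b c _
  · rw [cubie_two_smul_freud]
    simp only [cubie_swap X c a, cubie_swap X b a, mul_neg, Finset.sum_neg_distrib]; ring
  · simp only [eps_swap_left a, Int.cast_neg, mul_neg, Finset.sum_neg_distrib, sum_mul_mul_eps]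
  · simp only [← eps_cycle _ a b, sum_mul_mul_eps]
  · simp

/-- the null translation Θ(0,0,A,0), with A Hermitian, acts on
P(X,Y,p,q) (X, Y Hermitian, p, q real) by Θ·P(X,Y,p,q) = P(qA, 2·A*X, tr(A∘Y), 0). -/
theorem stmt5 (A : Mat3) (hA : Aᴴ = A) (X Y : Mat3) (hX : Xᴴ = X) (hY : Yᴴ = Y)
    (p q : ℝ) :
    act (ThetaM 0 0 A 0) (PT X Y (p : ℂ) (q : ℂ))
      = PT ((q : ℂ) • A) ((2 : ℂ) • freud A X) ((jord A Y).trace) 0 :=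
  stmt5_general A X Y p q
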